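/- Let Λ be a finite graph and Λ' a subgraph of Λ such that Λ is a strong forest relative to Λ'. Let k be the number of connected components of Λ that are disjoint from Λ'. Then χ(Λ) ≥ k + χ(Λ'), where χ denotes the Euler characteristic (number of vertices minus number of edges). -/

import Mathlib

/-- A combinatorial graph (Serre style): edges come with a fixed-point-free
reversal involution; loops and multiple edges are allowed. -/
structure SGraph where
  V : Type
  E : Type
  init : E → V
  bar : E → E
  bar_bar : ∀ e, bar (bar e) = e
  bar_ne : ∀ e, bar e ≠ e

namespace SGraph

variable (G : SGraph)

/-- Terminal vertex of an edge. -/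
def term (e : G.E) : G.V := G.init (G.bar e)

/-- Consecutive edges of the list match up. -/
def IsChain (l : List G.E) : Prop :=
  List.Chain' (fun e f => G.term e = G.init f) l

/-- A cycle: a nonempty closed edge path. -/
def IsCycle (l : List G.E) : Prop :=
  l ≠ [] ∧ G.IsChain l ∧
    ∀ e f, l.head? = some e → l.getLast? = some f → G.term f = G.init e

/-- A reduced cycle: no edge is followed (cyclically) by its reverse. -/
def IsReducedCycle (l : List G.E) : Prop :=
  G.IsCycle l ∧ List.Chain' (fun e f => f ≠ G.bar e) l ∧
    ∀ e f, l.head? = some e → l.getLast? = some f → e ≠ G.bar f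

/-- A graph is a forest if it contains no reduced cycle. -/
def IsForestGraph : Prop := ∀ l, ¬ G.IsReducedCycle l

/-- A subgraph: a set of vertices and a set of edges, closed under reversal,
with endpoints among the chosen vertices. -/
structure Subgraph (G : SGraph) where
  verts : Set G.V
  edges : Set G.E
  bar_mem : ∀ ⦃e⦄, e ∈ edges → G.bar e ∈ edges
  init_mem : ∀ ⦃e⦄, e ∈ edges → G.init e ∈ verts

variable {G}

namespace Subgraph

/-- Subgraph containment. -/
def le (H K : Subgraph G) : Prop := H.verts ⊆ K.verts ∧ H.edges ⊆ K.edges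

/-- Intersection of two subgraphs. -/
def inter (H K : Subgraph G) : Subgraph G where
  verts := H.verts ∩ K.verts
  edges := H.edges ∩ K.edges
  bar_mem := fun _ he => ⟨H.bar_mem he.1, K.bar_mem he.2⟩
  init_mem := fun _ he => ⟨H.init_mem he.1, K.init_mem he.2⟩

/-- All edges of the list lie in the subgraph. -/
def EdgesIn (H : Subgraph G) (l : List G.E) : Prop := ∀ e ∈ l, e ∈ H.edges

/-- A reduced cycle contained in the subgraph. -/
def IsReducedCycleIn (H : Subgraph G) (l : List G.E) : Prop :=
  G.IsReducedCycle l ∧ H.EdgesIn l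

/-- A subgraph is a forest if it contains no reduced cycle. -/
def IsForest (H : Subgraph G) : Prop := ∀ l, ¬ H.IsReducedCycleIn l

/-- Reachability inside a subgraph by edge paths. -/
inductive Reaches (H : Subgraph G) : G.V → G.V → Prop
  | refl (v : G.V) (hv : v ∈ H.verts) : Reaches H v v
  | step (e : G.E) (he : e ∈ H.edges) {q : G.V} (h : Reaches H (G.term e) q) :
      Reaches H (G.init e) q

/-- A subgraph is connected if it is nonempty and any two of its vertices are
joined by an edge path in it. -/
def Connected (H : Subgraph G) : Prop :=
  H.verts.Nonempty ∧ ∀ p ∈ H.verts, ∀ q ∈ H.verts, H.Reaches p q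

/-- A tree is a connected forest. -/
def IsTree (H : Subgraph G) : Prop := H.IsForest ∧ H.Connected

/-- `C` is a connected component of `H`: its vertices form a reachability class
of `H` and its edges are the induced ones. -/
def IsCompOf (C H : Subgraph G) : Prop :=
  ∃ v ∈ H.verts, C.verts = {w | H.Reaches v w} ∧
    C.edges = {e | e ∈ H.edges ∧ G.init e ∈ C.verts}

/-- `H` is a forest relative to `H'`: every reduced cycle of `H` is contained
in `H'`. -/
def ForestRel (H H' : Subgraph G) : Prop :=
  ∀ l, H.IsReducedCycleIn l → H'.EdgesIn l

/-- `H` is a strong forest relative to `H'`: a relative forest such that each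
component of `H` meets `H'` in an empty or connected subgraph. -/
def StrongForestRel (H H' : Subgraph G) : Prop :=
  H.ForestRel H' ∧
    ∀ C : Subgraph G, C.IsCompOf H → (C.inter H').verts = ∅ ∨ (C.inter H').Connected

/-- Euler characteristic: number of vertices minus number of (geometric)
edges; each geometric edge corresponds to a pair `{e, ē}`. -/
noncomputable def eulerChar (H : Subgraph G) : ℤ :=
  (H.verts.ncard : ℤ) - ((H.edges.ncard / 2 : ℕ) : ℤ)

/-- A walk in `H` from `p` to `q`, given as its list of traversed edges. -/
def IsWalk (H : Subgraph G) (p q : G.V) (l : List G.E) : Prop :=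
  H.EdgesIn l ∧ G.IsChain l ∧
    (∀ e, l.head? = some e → G.init e = p) ∧
    (∀ e, l.getLast? = some e → G.term e = q) ∧
    (l = [] → p = q ∧ p ∈ H.verts)

/-- The weight-0 subgraph of a zero/one-weighted subgraph: all of its vertices
together with its edges of weight 0. -/
def zeroSub (H : Subgraph G) (ω : G.E → ℕ) (hbar : ∀ e, ω (G.bar e) = ω e) :
    Subgraph G where
  verts := H.verts
  edges := {e | e ∈ H.edges ∧ ω e = 0}
  bar_mem := fun e he => ⟨H.bar_mem he.1, by rw [hbar]; exact he.2⟩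
  init_mem := fun _ he => H.init_mem he.1

end Subgraph

/-- The full subgraph of a graph. -/
def full (G : SGraph) : Subgraph G where
  verts := Set.univ
  edges := Set.univ
  bar_mem := fun _ _ => Set.mem_univ _
  init_mem := fun _ _ => Set.mem_univ _

open Classical in
/-- The quotient graph `G/H'` obtained by identifying the subgraph `H'` to a
single vertex `∗` (represented by `none`): its vertices are the vertices of
`G` not in `H'` together with `∗`; its edges are the edges of `G` not in `H'`,
with endpoints in `H'` replaced by `∗`. -/
noncomputable def quot (G : SGraph) (H' : Subgraph G) : SGraph where
  V := Option {v : G.V // v ∉ H'.verts}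
  E := {e : G.E // e ∉ H'.edges}
  init e := if h : G.init e.1 ∈ H'.verts then none else some ⟨G.init e.1, h⟩
  bar e := ⟨G.bar e.1, fun hc => e.2 (by simpa [G.bar_bar] using H'.bar_mem hc)⟩
  bar_bar e := Subtype.ext (G.bar_bar e.1)
  bar_ne e := fun hc => G.bar_ne e.1 (congrArg Subtype.val hc)

end SGraph

/-!
Induct on the edges of `Λ` outside `Λ'`. Such an edge `e` lies on no reduced cycle, so erasing
it (together with `ē`) disconnects its endpoints and raises `χ` by one. By the strong-forest
condition, vertices of `Λ'` joined in `Λ` are joined in `Λ' ⊆ Λ - e`, so at most one of the two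
new components meets `Λ'`: the number of components disjoint from `Λ'` grows by at least one.
Once every edge lies in `Λ'`, `χ(Λ) - χ(Λ')` is the number of vertices outside `Λ'`, and each
component disjoint from `Λ'` contains one of them.
-/

theorem Set.ncard_add_one_le_of_sdiff_singleton_subset {α : Type*} [Finite α]
    {s t : Set α} {a b c : α} (hst : s \ {c} ⊆ t) (ha : a ∈ t \ s)
    (hb : c ∈ s → b ∈ t \ s ∧ b ≠ a) : s.ncard + 1 ≤ t.ncard := by
  by_cases hc : c ∈ s
  · obtain ⟨⟨hbt, hbs⟩, hba⟩ := hb hc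
    have hb' : b ∉ s \ {c} := fun h => hbs h.1
    have ha' : a ∉ insert b (s \ {c}) := by
      rintro (rfl | h)
      · exact hba rfl
      · exact ha.2 h.1
    have hle := Set.ncard_le_ncard (Set.insert_subset ha.1 (Set.insert_subset hbt hst))
    rw [Set.ncard_insert_of_notMem ha', Set.ncard_insert_of_notMem hb'] at hle
    have := Set.ncard_sdiff_singleton_add_one hc
    omega
  · rw [Set.sdiff_singleton_eq_self hc] at hst
    simpa [Set.ncard_insert_of_notMem ha.2] using
      Set.ncard_le_ncard (Set.insert_subset ha.1 hst)

namespace SGraph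

variable {G : SGraph}

theorem bar_involutive : Function.Involutive G.bar := G.bar_bar

theorem term_bar (e : G.E) : G.term (G.bar e) = G.init e := by
  rw [term, G.bar_bar]

namespace Subgraph

variable {H K L : Subgraph G} {e f : G.E} {p q v w : G.V}

theorem ext (hv : H.verts = K.verts) (he : H.edges = K.edges) : H = K := by
  cases H; cases K; simp_all

instance [Finite G.V] [Finite G.E] : Finite (Subgraph G) :=
  Finite.of_injective (fun H : Subgraph G => (H.verts, H.edges))
    fun _ _ h => ext (congrArg Prod.fst h) (congrArg Prod.snd h)

theorem Reaches.left_mem (h : H.Reaches p q) : p ∈ H.verts := by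
  induction h with
  | refl v hv => exact hv
  | step e he => exact H.init_mem he

theorem Reaches.trans {r : G.V} (h₁ : H.Reaches p q) (h₂ : H.Reaches q r) : H.Reaches p r := by
  induction h₁ with
  | refl => exact h₂
  | step e he _ ih => exact .step e he (ih h₂)

theorem Reaches.single (he : e ∈ H.edges) : H.Reaches (G.init e) (G.term e) :=
  .step e he (.refl _ (H.init_mem (H.bar_mem he)))

theorem Reaches.single_bar (he : e ∈ H.edges) : H.Reaches (G.term e) (G.init e) := by
  have h := Reaches.single (H.bar_mem he)
  rwa [term_bar] at h

theorem Reaches.symm (h : H.Reaches p q) : H.Reaches q p := by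
  induction h with
  | refl v hv => exact .refl v hv
  | step e he _ ih => exact ih.trans (.single_bar he)

theorem Reaches.mono (hHK : H.le K) (h : H.Reaches p q) : K.Reaches p q := by
  induction h with
  | refl v hv => exact .refl v (hHK.1 hv)
  | step e he _ ih => exact .step e (hHK.2 he) ih

theorem IsWalk.nil (hv : v ∈ H.verts) : H.IsWalk v v [] :=
  ⟨by simp [EdgesIn], List.isChain_nil, by simp, by simp, fun _ => ⟨rfl, hv⟩⟩

theorem IsWalk.cons {l : List G.E} (he : e ∈ H.edges) (h : H.IsWalk (G.term e) q l) :
    H.IsWalk (G.init e) q (e :: l) := by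
  obtain ⟨hE, hC, hh, hl, hn⟩ := h
  refine ⟨List.forall_mem_cons.mpr ⟨he, hE⟩, ?_, by simp, ?_, by simp⟩
  · cases l with
    | nil => exact List.isChain_singleton e
    | cons f t => exact List.isChain_cons_cons.mpr ⟨(hh f rfl).symm, hC⟩
  · cases l with
    | nil => simpa using (hn rfl).1
    | cons f t => simpa [List.getLast?_cons_cons] using hl

theorem IsWalk.tail {l : List G.E} (h : H.IsWalk p q (e :: l)) : H.IsWalk (G.term e) q l := by
  obtain ⟨hE, hC, -, hl, -⟩ := h
  refine ⟨fun x hx => hE x (List.mem_cons_of_mem _ hx), hC.tail, ?_, ?_, ?_⟩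
  · cases l with
    | nil => simp
    | cons f t => simpa using (List.isChain_cons_cons.mp hC).1.symm
  · cases l with
    | nil => simp
    | cons f t => simpa [List.getLast?_cons_cons] using hl
  · rintro rfl
    exact ⟨hl e rfl, H.init_mem (H.bar_mem (hE e List.mem_cons_self))⟩

def IsReducedWalk (H : Subgraph G) (p q : G.V) (l : List G.E) : Prop :=
  H.IsWalk p q l ∧ List.IsChain (fun e f => f ≠ G.bar e) l

theorem Reaches.exists_isReducedWalk (h : H.Reaches p q) : ∃ l, H.IsReducedWalk p q l := by
  induction h with
  | refl v hv => exact ⟨[], IsWalk.nil hv, List.isChain_nil⟩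
  | step e he _ ih =>
    obtain ⟨l, hw, hred⟩ := ih
    cases l with
    | nil => exact ⟨[e], hw.cons he, List.isChain_singleton e⟩
    | cons f t =>
      by_cases hfe : f = G.bar e
      · subst hfe
        exact ⟨t, by simpa [term_bar] using hw.tail, hred.tail⟩
      · exact ⟨e :: f :: t, hw.cons he, List.isChain_cons_cons.mpr ⟨hfe, hred⟩⟩

def erase (H : Subgraph G) (e : G.E) : Subgraph G where
  verts := H.verts
  edges := H.edges \ {e, G.bar e}
  bar_mem f hf := by
    refine ⟨H.bar_mem hf.1, fun hc => hf.2 ?_⟩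
    rcases hc with hc | hc
    · exact Or.inr (by simp [← hc, G.bar_bar])
    · exact Or.inl (bar_involutive.injective hc)
  init_mem _ hf := H.init_mem hf.1

theorem mem_erase_edges :
    f ∈ (H.erase e).edges ↔ f ∈ H.edges ∧ f ≠ e ∧ f ≠ G.bar e := by
  simp [erase]

theorem erase_le : (H.erase e).le H :=
  ⟨subset_rfl, fun _ hf => (mem_erase_edges.1 hf).1⟩

theorem le_erase (hLH : L.le H) (heL : e ∉ L.edges) : L.le (H.erase e) := by
  refine ⟨hLH.1, fun f hf => mem_erase_edges.2 ⟨hLH.2 hf, ?_, ?_⟩⟩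
  · rintro rfl
    exact heL hf
  · rintro rfl
    exact heL (by simpa [G.bar_bar] using L.bar_mem hf)

theorem eulerChar_erase [Finite G.E] (he : e ∈ H.edges) :
    (H.erase e).eulerChar = H.eulerChar + 1 := by
  have hpair : ({e, G.bar e} : Set G.E) ⊆ H.edges :=
    Set.insert_subset he (Set.singleton_subset_iff.2 (H.bar_mem he))
  have hcard := Set.ncard_sdiff_add_ncard_of_subset hpair
  rw [Set.ncard_pair (G.bar_ne e).symm] at hcard
  simp only [eulerChar, erase]
  omega

theorem isReducedCycle_cons {l : List G.E}
    (hw : (H.erase e).IsReducedWalk (G.term e) (G.init e) l) : G.IsReducedCycle (e :: l) := by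
  obtain ⟨⟨hE, hC, hh, hl, hn⟩, hred⟩ := hw
  have hne_bar : ∀ f ∈ l, f ≠ G.bar e := fun f hf => (mem_erase_edges.1 (hE f hf)).2.2
  refine ⟨⟨List.cons_ne_nil e l, ?_, ?_⟩, ?_, ?_⟩
  · cases l with
    | nil => exact List.isChain_singleton e
    | cons f t => exact List.isChain_cons_cons.2 ⟨(hh f rfl).symm, hC⟩
  · intro e' f he' hf
    simp only [List.head?_cons, Option.some.injEq] at he'
    subst he'
    cases l with
    | nil =>
      obtain rfl : e = f := by simpa using hf
      exact (hn rfl).1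
    | cons g t => exact hl f (by simpa [List.getLast?_cons_cons] using hf)
  · cases l with
    | nil => exact List.isChain_singleton e
    | cons f t => exact List.isChain_cons_cons.2 ⟨hne_bar f List.mem_cons_self, hred⟩
  · intro e' f he' hf hef
    simp only [List.head?_cons, Option.some.injEq] at he'
    subst he'
    cases l with
    | nil =>
      obtain rfl : e = f := by simpa using hf
      exact G.bar_ne e hef.symm
    | cons g t =>
      have hfl : f ∈ g :: t := List.mem_of_getLast? (by simpa [List.getLast?_cons_cons] using hf)
      exact hne_bar f hfl (by rw [hef, G.bar_bar])

theorem ForestRel.not_reaches_erase (hF : H.ForestRel L) (he : e ∈ H.edges)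
    (heL : e ∉ L.edges) : ¬(H.erase e).Reaches (G.init e) (G.term e) := by
  intro hr
  obtain ⟨l, hw⟩ := hr.symm.exists_isReducedWalk
  have hwH : H.EdgesIn (e :: l) :=
    List.forall_mem_cons.2 ⟨he, fun f hf => (mem_erase_edges.1 (hw.1.1 f hf)).1⟩
  exact heL (hF _ ⟨isReducedCycle_cons hw, hwH⟩ e List.mem_cons_self)

theorem ForestRel.mono (hF : H.ForestRel L) (hKH : K.le H) : K.ForestRel L :=
  fun l hl => hF l ⟨hl.1, fun f hf => hKH.2 (hl.2 f hf)⟩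

def compOf (H : Subgraph G) (v : G.V) : Subgraph G where
  verts := {w | H.Reaches v w}
  edges := {f | f ∈ H.edges ∧ H.Reaches v (G.init f)}
  bar_mem _ hf := ⟨H.bar_mem hf.1, hf.2.trans (.single hf.1)⟩
  init_mem _ hf := hf.2

theorem mem_compOf_self (hv : v ∈ H.verts) : v ∈ (compOf H v).verts := .refl v hv

theorem isCompOf_compOf (hv : v ∈ H.verts) : (compOf H v).IsCompOf H := ⟨v, hv, rfl, rfl⟩

theorem isCompOf_iff {C : Subgraph G} : C.IsCompOf H ↔ ∃ v ∈ H.verts, C = compOf H v := by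
  constructor
  · rintro ⟨v, hv, hverts, hedges⟩
    exact ⟨v, hv, ext hverts (by rw [hedges, hverts]; rfl)⟩
  · rintro ⟨v, hv, rfl⟩
    exact isCompOf_compOf hv

theorem compOf_congr (h : H.Reaches v w) : compOf H v = compOf H w :=
  ext (Set.ext fun _ => ⟨h.symm.trans, h.trans⟩)
    (Set.ext fun _ => and_congr_right fun _ => ⟨h.symm.trans, h.trans⟩)

theorem IsCompOf.eq_compOf {C : Subgraph G} (hC : C.IsCompOf H) (hw : w ∈ C.verts) :
    C = compOf H w := by
  obtain ⟨v, -, rfl⟩ := isCompOf_iff.1 hC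
  exact compOf_congr hw

theorem mem_erase_edges_of_not_reaches (hv : ¬H.Reaches v (G.init e)) (hf : f ∈ H.edges)
    (hvf : H.Reaches v (G.init f)) : f ∈ (H.erase e).edges := by
  refine mem_erase_edges.2 ⟨hf, ?_, ?_⟩
  · rintro rfl
    exact hv hvf
  · rintro rfl
    exact hv (by simpa [term_bar] using hvf.trans (.single hf))

theorem reaches_erase_of_not_reaches (hv : ¬H.Reaches v (G.init e)) (h : H.Reaches v w) :
    (H.erase e).Reaches v w := by
  induction h with
  | refl u hu => exact .refl u hu
  | step f hf _ ih =>
    have hterm : ¬H.Reaches (G.term f) (G.init e) := fun h => hv (.step f hf h)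
    exact .step f (mem_erase_edges_of_not_reaches hv hf (.refl _ (H.init_mem hf))) (ih hterm)

theorem compOf_erase_of_not_reaches (hv : ¬H.Reaches v (G.init e)) :
    compOf (H.erase e) v = compOf H v := by
  refine ext (Set.ext fun w => ⟨Reaches.mono erase_le, reaches_erase_of_not_reaches hv⟩)
    (Set.ext fun f => ⟨fun hf => ⟨erase_le.2 hf.1, hf.2.mono erase_le⟩, fun hf => ?_⟩)
  exact ⟨mem_erase_edges_of_not_reaches hv hf.1 hf.2, reaches_erase_of_not_reaches hv hf.2⟩

theorem IsCompOf.isCompOf_erase {C : Subgraph G} (hC : C.IsCompOf H)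
    (hne : C ≠ compOf H (G.init e)) : C.IsCompOf (H.erase e) := by
  obtain ⟨v, hv, rfl⟩ := isCompOf_iff.1 hC
  rw [← compOf_erase_of_not_reaches fun h => hne (compOf_congr h)]
  exact isCompOf_compOf hv

/-- The component condition of `StrongForestRel`, phrased without components; unlike that
condition, it is inherited by the subgraphs of `H`. -/
def ReachesReflect (H L : Subgraph G) : Prop :=
  ∀ ⦃p q⦄, p ∈ L.verts → q ∈ L.verts → H.Reaches p q → L.Reaches p q

theorem StrongForestRel.reachesReflect (h : H.StrongForestRel L) : H.ReachesReflect L := by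
  intro p q hp hq hpq
  have hpC : p ∈ (compOf H p).verts := mem_compOf_self hpq.left_mem
  rcases h.2 _ (isCompOf_compOf hpq.left_mem) with hempty | hconn
  · exact absurd hempty (Set.nonempty_iff_ne_empty.1 ⟨p, hpC, hp⟩)
  · have hLC : ((compOf H p).inter L).le L := ⟨Set.inter_subset_right, Set.inter_subset_right⟩
    exact (hconn.2 p ⟨hpC, hp⟩ q ⟨hpq, hq⟩).mono hLC

theorem ReachesReflect.mono (hR : H.ReachesReflect L) (hKH : K.le H) : K.ReachesReflect L :=
  fun _ _ hp hq hpq => hR hp hq (hpq.mono hKH)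

def disjointComps (H L : Subgraph G) : Set (Subgraph G) :=
  {C | C.IsCompOf H ∧ C.verts ∩ L.verts = ∅}

theorem ncard_disjointComps_le [Finite G.V] :
    (disjointComps H L).ncard ≤ (H.verts \ L.verts).ncard := by
  have hsub : disjointComps H L ⊆ compOf H '' (H.verts \ L.verts) := by
    rintro C ⟨hC, hCL⟩
    obtain ⟨v, hv, rfl⟩ := isCompOf_iff.1 hC
    exact ⟨v, ⟨hv, fun hvL => hCL.subset ⟨mem_compOf_self hv, hvL⟩⟩, rfl⟩
  exact (Set.ncard_le_ncard hsub).trans Set.ncard_image_le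

theorem compOf_mem_disjointComps_sdiff {u : G.V} (hu : u ∈ K.verts) (hH : H.Reaches u w)
    (hK : ¬K.Reaches u w) (hL : (compOf K u).verts ∩ L.verts = ∅) :
    compOf K u ∈ disjointComps K L \ disjointComps H L := by
  refine ⟨⟨isCompOf_compOf hu, hL⟩, fun hC => hK ?_⟩
  have hw : w ∈ (compOf H u).verts := hH
  rwa [← hC.1.eq_compOf (mem_compOf_self hu)] at hw

theorem ReachesReflect.compOf_erase_disjoint (hR : H.ReachesReflect L) (hLe : L.le (H.erase e))
    (he : e ∈ H.edges) (hbridge : ¬(H.erase e).Reaches (G.init e) (G.term e)) :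
    (compOf (H.erase e) (G.init e)).verts ∩ L.verts = ∅ ∨
      (compOf (H.erase e) (G.term e)).verts ∩ L.verts = ∅ := by
  by_contra! hmeet
  obtain ⟨⟨a, ha, haL⟩, ⟨b, hb, hbL⟩⟩ := hmeet
  have hab : H.Reaches a b :=
    (ha.mono erase_le).symm.trans ((Reaches.single he).trans (hb.mono erase_le))
  exact hbridge (ha.trans (((hR haL hbL hab).mono hLe).trans hb.symm))

theorem ncard_disjointComps_erase [Finite G.V] [Finite G.E] (hR : H.ReachesReflect L)
    (hLe : L.le (H.erase e)) (he : e ∈ H.edges)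
    (hbridge : ¬(H.erase e).Reaches (G.init e) (G.term e)) :
    (disjointComps H L).ncard + 1 ≤ (disjointComps (H.erase e) L).ncard := by
  set C := compOf H (G.init e)
  set A := compOf (H.erase e) (G.init e)
  set B := compOf (H.erase e) (G.term e)
  have hinit : G.init e ∈ (H.erase e).verts := H.init_mem he
  have hterm : G.term e ∈ (H.erase e).verts := H.init_mem (H.bar_mem he)
  have hAB : A ≠ B := by
    intro h
    have htA : G.term e ∈ A.verts := h ▸ mem_compOf_self hterm
    exact hbridge htA
  have hA_new (hA : A.verts ∩ L.verts = ∅) := compOf_mem_disjointComps_sdiff hinit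
    (.single he) hbridge hA
  have hB_new (hB : B.verts ∩ L.verts = ∅) := compOf_mem_disjointComps_sdiff hterm
    (.single_bar he) (fun h => hbridge h.symm) hB
  have hsub : disjointComps H L \ {C} ⊆ disjointComps (H.erase e) L :=
    fun _ ⟨⟨hC, hCL⟩, hne⟩ => ⟨hC.isCompOf_erase hne, hCL⟩
  have hsplit {D : Subgraph G} (hDC : D.verts ⊆ C.verts) (hC : C ∈ disjointComps H L) :
      D.verts ∩ L.verts = ∅ :=
    Set.subset_eq_empty (Set.inter_subset_inter_left _ hDC) hC.2
  rcases hR.compOf_erase_disjoint hLe he hbridge with hA | hB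
  · refine Set.ncard_add_one_le_of_sdiff_singleton_subset hsub (hA_new hA)
      fun hC => ⟨hB_new (hsplit ?_ hC), hAB.symm⟩
    exact fun _ h => (Reaches.single he).trans (h.mono erase_le)
  · exact Set.ncard_add_one_le_of_sdiff_singleton_subset hsub (hB_new hB)
      fun hC => ⟨hA_new (hsplit (fun _ h => h.mono erase_le) hC), hAB⟩

theorem ncard_disjointComps_add_eulerChar_le [Finite G.V] [Finite G.E] (H L : Subgraph G)
    (hLH : L.le H) (hF : H.ForestRel L) (hR : H.ReachesReflect L) :
    ((disjointComps H L).ncard : ℤ) + L.eulerChar ≤ H.eulerChar := by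
  by_cases hE : H.edges ⊆ L.edges
  · have hedges : H.edges = L.edges := hE.antisymm hLH.2
    have hverts := Set.ncard_sdiff_add_ncard_of_subset hLH.1
    have hcomps := ncard_disjointComps_le (H := H) (L := L)
    simp only [eulerChar, hedges]
    omega
  · obtain ⟨e, heH, heL⟩ := Set.not_subset.1 hE
    have hLe := le_erase hLH heL
    have hbridge := hF.not_reaches_erase heH heL
    have hcomps := ncard_disjointComps_erase hR hLe heH hbridge
    have hrec := ncard_disjointComps_add_eulerChar_le (H.erase e) L hLe
      (hF.mono erase_le) (hR.mono erase_le)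
    rw [eulerChar_erase heH] at hrec
    omega
termination_by (H.edges \ L.edges).ncard
decreasing_by
  refine Set.ncard_lt_ncard ⟨Set.sdiff_subset_sdiff_left erase_le.2, fun hsub => ?_⟩
  exact (mem_erase_edges.1 (hsub ⟨heH, heL⟩).1).2.1 rfl

end Subgraph

end SGraph

/-- If `Λ` (here: the full subgraph of the finite graph `G`) is a
strong forest relative to `Λ'`, and `k` is the number of connected components
of `Λ` disjoint from `Λ'`, then `χ(Λ) ≥ k + χ(Λ')`. -/
theorem euler_char_ge_of_strong_forest_rel
    (G : SGraph) [Fintype G.V] [Fintype G.E]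
    (Λ' : SGraph.Subgraph G)
    (h : (G.full).StrongForestRel Λ') :
    (({C : SGraph.Subgraph G | C.IsCompOf G.full ∧ C.verts ∩ Λ'.verts = ∅}.ncard : ℤ))
        + Λ'.eulerChar ≤ (G.full).eulerChar :=
  SGraph.Subgraph.ncard_disjointComps_add_eulerChar_le G.full Λ'
    ⟨Set.subset_univ _, Set.subset_univ _⟩ h.1 h.reachesReflect
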